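/- Let q be a real number with q ≥ 2 and let λ be a partition in which every odd part occurs with even multiplicity. Then q^{n(λ) + (|λ| + o(λ))/2} · ∏_{i≥1} ∏_{j=1}^{⌊m_i(λ)/2⌋} (1 - q^{-2j}) ≥ q^{|λ|/2} · (1 - 1/q² - 1/q⁴). (Note |λ| and o(λ) are both even, so the exponents are integers.) -/

import Mathlib

/-- The partition statistic `n(μ) = ∑_i (i-1) μ_i` (parts in decreasing order). -/
def partN (μ : Multiset ℕ) : ℕ :=
  (((μ.sort (· ≤ ·)).reverse).zipIdx.map (fun p => p.2 * p.1)).sum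

/-- The number of odd parts of a partition, counted with multiplicity. -/
def partO (μ : Multiset ℕ) : ℕ := Multiset.card (μ.filter (fun i => i % 2 = 1))

/-!
Put `t = q⁻²`, so the double product is `∏ᵢ (t; t)_{⌊mᵢ/2⌋}` with `(t; t)_M = ∏_{j ≤ M} (1 - tʲ)`.
Since `(N + o(λ))/2 ≥ N/2` it suffices to show `1 - t - t² ≤ q^{n(λ)} ∏ᵢ (t; t)_{⌊mᵢ/2⌋}`.
If no part repeats, the product is `1`. Otherwise fix a repeated part `i₀`: its factor is at least
`1 - t - t²` (a truncation of Euler's pentagonal series), and every other factor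
`(t; t)_c` is at least `tᶜ` because `1 - tʲ ≥ 1 - t ≥ t`. The exponents so lost add up to at most
`(ℓ(λ) - 2)/2`, and `ℓ(λ) - 1 ≤ n(λ)`, so `q^{n(λ)}` pays for them.
-/

open Finset

section PochhammerBounds

variable {t : ℝ}

lemma one_sub_sub_sq_add_pow_le_prod_one_sub_pow (ht0 : 0 ≤ t) (ht1 : t ≤ 1) (M : ℕ) :
    1 - t - t ^ 2 + t ^ (M + 2) ≤ ∏ j ∈ Icc 1 (M + 1), (1 - t ^ j) := by
  induction M with
  | zero => simp
  | succ M ih =>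
    rw [prod_Icc_succ_top (by omega)]
    have hfac : 0 ≤ 1 - t ^ (M + 2) := sub_nonneg.mpr (pow_le_one₀ ht0 ht1)
    have hpow : t ^ (2 * M + 4) ≤ t ^ (M + 4) := pow_le_pow_of_le_one ht0 ht1 (by omega)
    calc 1 - t - t ^ 2 + t ^ (M + 1 + 2)
        ≤ 1 - t - t ^ 2 + t ^ (M + 3) + (t ^ (M + 4) - t ^ (2 * M + 4)) := by linarith
      _ = (1 - t - t ^ 2 + t ^ (M + 2)) * (1 - t ^ (M + 2)) := by ring
      _ ≤ _ := mul_le_mul_of_nonneg_right ih hfac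

lemma one_sub_sub_sq_le_prod_one_sub_pow (ht0 : 0 ≤ t) (ht1 : t ≤ 1) (M : ℕ) :
    1 - t - t ^ 2 ≤ ∏ j ∈ Icc 1 M, (1 - t ^ j) := by
  rcases M with _ | M
  · simp only [zero_lt_one, Icc_eq_empty_of_lt, prod_empty]; nlinarith
  · linarith [one_sub_sub_sq_add_pow_le_prod_one_sub_pow ht0 ht1 M, pow_nonneg ht0 (M + 2)]

lemma pow_le_prod_one_sub_pow (ht0 : 0 ≤ t) (ht : t ≤ 1 / 2) (M : ℕ) :
    t ^ M ≤ ∏ j ∈ Icc 1 M, (1 - t ^ j) := by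
  calc t ^ M = ∏ _j ∈ Icc 1 M, t := by simp
    _ ≤ _ := prod_le_prod (fun _ _ => ht0) fun j hj => by
      linarith [pow_le_of_le_one ht0 (by linarith) (by grind : j ≠ 0)]

lemma one_sub_sub_sq_mul_pow_sum_erase_le_prod {ι : Type*} [DecidableEq ι]
    (ht0 : 0 ≤ t) (ht : t ≤ 1 / 2) {s : Finset ι} {i₀ : ι} (hi₀ : i₀ ∈ s) (c : ι → ℕ) :
    (1 - t - t ^ 2) * t ^ (∑ i ∈ s.erase i₀, c i) ≤ ∏ i ∈ s, ∏ j ∈ Icc 1 (c i), (1 - t ^ j) := by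
  rw [← mul_prod_erase s _ hi₀, ← prod_pow_eq_pow_sum]
  have hmain := one_sub_sub_sq_le_prod_one_sub_pow ht0 (by linarith) (c i₀)
  have hrest := prod_le_prod (s := s.erase i₀) (fun i _ => pow_nonneg ht0 (c i))
    fun i _ => pow_le_prod_one_sub_pow ht0 ht (c i)
  have hpos : 0 ≤ 1 - t - t ^ 2 := by nlinarith
  exact mul_le_mul hmain hrest (by positivity) (hpos.trans hmain)

end PochhammerBounds

lemma card_le_partN_add_one {μ : Multiset ℕ} (hμ : ∀ x ∈ μ, 0 < x) :
    Multiset.card μ ≤ partN μ + 1 := by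
  set l := (μ.sort (· ≤ ·)).reverse
  have hlen : l.length = Multiset.card μ := by simp [l]
  have hidx : (List.range l.length).sum ≤ partN μ := by
    rw [List.range_eq_range', ← List.zipIdx_map_snd]
    refine List.sum_le_sum fun p hp => Nat.le_mul_of_pos_right _ (hμ _ ?_)
    simpa [l] using List.fst_mem_of_mem_zipIdx hp
  rcases Nat.eq_zero_or_pos l.length with h0 | hpos
  · omega
  · have := List.single_le_sum (fun x _ => Nat.zero_le x) _
      (List.mem_range.mpr (Nat.sub_lt hpos one_pos))
    omega

namespace Nat.Partition

variable {N : ℕ} (lam : N.Partition)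

lemma sum_count_Icc_eq_card : ∑ i ∈ Icc 1 N, lam.parts.count i = Multiset.card lam.parts := by
  classical
  have hsub : lam.parts.toFinset ⊆ Icc 1 N := fun i hi => by
    rw [Multiset.mem_toFinset] at hi
    exact mem_Icc.mpr ⟨lam.parts_pos hi, lam.le_of_mem_parts hi⟩
  rw [← sum_subset hsub fun i _ hi => Multiset.count_eq_zero.mpr (by simpa using hi)]
  exact Multiset.toFinset_sum_count_eq _

lemma two_mul_sum_erase_count_div_two_le_partN {i₀ : ℕ} (hi₀ : i₀ ∈ Icc 1 N)
    (hrep : 2 ≤ lam.parts.count i₀) :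
    2 * (∑ i ∈ (Icc 1 N).erase i₀, lam.parts.count i / 2) ≤ partN lam.parts := by
  have hhalf : 2 * (∑ i ∈ (Icc 1 N).erase i₀, lam.parts.count i / 2)
      ≤ ∑ i ∈ (Icc 1 N).erase i₀, lam.parts.count i := by
    rw [mul_sum]
    exact sum_le_sum fun i _ => Nat.mul_div_le _ 2
  have hsplit := add_sum_erase _ (fun i => lam.parts.count i) hi₀
  have := card_le_partN_add_one fun _ hx => lam.parts_pos hx
  have := lam.sum_count_Icc_eq_card
  omega

lemma one_sub_sub_sq_mul_pow_le_prod {t : ℝ} (ht0 : 0 ≤ t) (ht : t ≤ 1 / 2) :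
    (1 - t - t ^ 2) * t ^ (partN lam.parts / 2) ≤
      ∏ i ∈ Icc 1 N, ∏ j ∈ Icc 1 (lam.parts.count i / 2), (1 - t ^ j) := by
  by_cases hrep : ∃ i₀ ∈ Icc 1 N, 2 ≤ lam.parts.count i₀
  · obtain ⟨i₀, hi₀, hcount⟩ := hrep
    have hS := lam.two_mul_sum_erase_count_div_two_le_partN hi₀ hcount
    refine le_trans ?_ (one_sub_sub_sq_mul_pow_sum_erase_le_prod ht0 ht hi₀ _)
    exact mul_le_mul_of_nonneg_left (pow_le_pow_of_le_one ht0 (by linarith) (by omega))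
      (by nlinarith)
  · push Not at hrep
    rw [prod_eq_one fun i hi => by rw [Nat.div_eq_of_lt (hrep i hi)]; simp]
    exact mul_le_one₀ (by nlinarith) (pow_nonneg ht0 _) (pow_le_one₀ ht0 (by linarith))

end Nat.Partition

theorem stmt13_general (q : ℝ) (hq : 2 ≤ q) (N : ℕ) (lam : Nat.Partition N) :
    q ^ (partN lam.parts + (N + partO lam.parts) / 2) *
      ∏ i ∈ Finset.Icc 1 N, ∏ j ∈ Finset.Icc 1 (lam.parts.count i / 2),
        (1 - q⁻¹ ^ (2 * j)) ≥
    q ^ (N / 2) * (1 - 1 / q ^ 2 - 1 / q ^ 4) := by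
  set t := q⁻¹ ^ 2 with ht
  have hq1 : 1 ≤ q := by linarith
  have ht0 : 0 ≤ t := by positivity
  have ht2 : t ≤ 1 / 2 := by
    rw [ht, inv_pow, inv_le_comm₀ (by positivity) (by norm_num)]; nlinarith
  simp only [pow_mul, ← ht, one_div, ← inv_pow, show 4 = 2 * 2 from rfl]
  set n := partN lam.parts
  have hkey := lam.one_sub_sub_sq_mul_pow_le_prod ht0 ht2
  have hscale : 1 ≤ q ^ n * t ^ (n / 2) := by
    rw [ht, ← pow_mul, inv_pow, ← div_eq_mul_inv, one_le_div (by positivity)]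
    exact pow_le_pow_right₀ hq1 (Nat.mul_div_le n 2)
  have hexp : q ^ (N / 2) ≤ q ^ ((N + partO lam.parts) / 2) :=
    pow_le_pow_right₀ hq1 (Nat.div_le_div_right (Nat.le_add_right _ _))
  have hpos : 0 ≤ 1 - t - t ^ 2 := by nlinarith
  calc q ^ (N / 2) * (1 - t - t ^ 2)
      ≤ q ^ ((N + partO lam.parts) / 2) * (q ^ n * t ^ (n / 2) * (1 - t - t ^ 2)) := by
        gcongr; exact le_mul_of_one_le_left hpos hscale
    _ = q ^ (n + (N + partO lam.parts) / 2) * ((1 - t - t ^ 2) * t ^ (n / 2)) := by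
        rw [pow_add]; ring
    _ ≤ _ := by gcongr

theorem stmt13 (q : ℝ) (hq : 2 ≤ q) (N : ℕ) (lam : Nat.Partition N)
    (hlam : ∀ i, i % 2 = 1 → lam.parts.count i % 2 = 0) :
    q ^ (partN lam.parts + (N + partO lam.parts) / 2) *
      ∏ i ∈ Finset.Icc 1 N, ∏ j ∈ Finset.Icc 1 (lam.parts.count i / 2),
        (1 - q⁻¹ ^ (2 * j)) ≥
    q ^ (N / 2) * (1 - 1 / q ^ 2 - 1 / q ^ 4) :=
  stmt13_general q hq N lam
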